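/- arXiv:1407.4546 — 2 statements merged into one kernel-verified Lean document; each statement's English description precedes it below -/
import Mathlib

section
/- For the Kochar kernel h(x_1, x_2; y_1, y_2) = I{yyxx or xyyx} − I{xxyy or yxxy} (where yyxx means max(y_1,y_2) ≤ min(x_1,x_2); xyyx means min(x_1,x_2) ≤ min(y_1,y_2) and max(y_1,y_2) ≤ max(x_1,x_2); xxyy means max(x_1,x_2) ≤ min(y_1,y_2); yxxy means min(y_1,y_2) ≤ min(x_1,x_2) and max(x_1,x_2) ≤ max(y_1,y_2)) with X_1, X_2 i.i.d. ~ F and, independently, Y_1, Y_2 i.i.d. ~ G: if F = G and F is continuous, then the projections satisfy h_1(x) = E[h(x, X_2; Y_1, Y_2)] = −(4/3)G(x)³ + 4G(x)² − 2G(x) and h_2(y) = E[h(X_1, X_2; y, Y_2)] = (4/3)G(y)³ − 4G(y)² + 2G(y) for every x, y ∈ ℝ, and σ_1² = Var h_1(X_1) = 8/105 and σ_2² = Var h_2(Y_1) = 8/105. -/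
/-!
With `F = G` continuous, all four observations have one law `μ` whose cdf `G` is continuous, so
ties are null and `G(X)` is uniform on `(0, 1)` (probability integral transform). Given
`X = (x, a)` with `x ≠ a`, off ties the kernel is a sum of products of indicators of
`(-∞, m]`, `(m, M]`, `(M, ∞)` at `Y₁` and `Y₂` (with `m`, `M` the smaller and larger of `x`, `a`),
so its mean is a polynomial in `G m` and `G M`. Averaging over `a` becomes a polynomial integral
over `G a ~ U(0, 1)`, which gives the cubic `h₁`. The kernel is antisymmetric under swapping the
two samples, so `h₂ = -h₁`; and since `∫₀¹ h₁ = 0`, both variances equal `∫₀¹ h₁(u)² du`.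
-/

open MeasureTheory ProbabilityTheory Filter Finset

/-- The Kochar kernel of order (2,2): indicator of pattern "yyxx or xyyx" minus
indicator of pattern "xxyy or yxxy". -/
noncomputable def kocharKernel (x₁ x₂ y₁ y₂ : ℝ) : ℝ :=
  (if (max y₁ y₂ ≤ min x₁ x₂) ∨
      (min x₁ x₂ ≤ min y₁ y₂ ∧ max y₁ y₂ ≤ max x₁ x₂) then (1 : ℝ) else 0) -
  (if (max x₁ x₂ ≤ min y₁ y₂) ∨
      (min y₁ y₂ ≤ min x₁ x₂ ∧ max x₁ x₂ ≤ max y₁ y₂) then (1 : ℝ) else 0)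

open Set Topology

lemma exists_preimage_Iic_eq_Iic {f : ℝ → ℝ} (hf : Continuous f) (hmono : Monotone f) {u : ℝ}
    (hne : (f ⁻¹' Set.Iic u).Nonempty) (hbdd : BddAbove (f ⁻¹' Set.Iic u)) :
    ∃ s, f ⁻¹' Set.Iic u = Set.Iic s ∧ f s = u := by
  set s := sSup (f ⁻¹' Set.Iic u)
  have hs : f s ≤ u := (isClosed_Iic.preimage hf).csSup_mem hne hbdd
  refine ⟨s, Subset.antisymm (fun a ha ↦ le_csSup hbdd ha) (fun a ha ↦ (hmono ha).trans hs),
    hs.antisymm ?_⟩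
  have hright : ∀ᶠ a in 𝓝[>] s, u ≤ f a :=
    eventually_nhdsWithin_of_forall fun a ha ↦ le_of_not_ge fun hau ↦
      (not_le.mpr ha) (le_csSup hbdd hau)
  exact ge_of_tendsto ((hf.tendsto s).mono_left nhdsWithin_le_nhds) hright

section ContinuousCDF

variable {μ : Measure ℝ} [IsProbabilityMeasure μ]

theorem map_cdf_eq_restrict_Ioc (hc : Continuous (cdf μ)) :
    μ.map (cdf μ) = volume.restrict (Ioc 0 1) := by
  have : IsFiniteMeasure (μ.map (cdf μ)) := Measure.isFiniteMeasure_map _ _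
  refine Measure.ext_of_Iic _ _ fun u ↦ ?_
  rw [Measure.map_apply hc.measurable measurableSet_Iic,
    Measure.restrict_apply measurableSet_Iic, inter_comm, Ioc_inter_Iic, Real.volume_Ioc,
    sub_zero]
  by_cases hne : (cdf μ ⁻¹' Iic u).Nonempty
  · by_cases hbdd : BddAbove (cdf μ ⁻¹' Iic u)
    · obtain ⟨s, hS, rfl⟩ := exists_preimage_Iic_eq_Iic hc (monotone_cdf μ) hne hbdd
      rw [hS, ← ofReal_cdf, min_eq_right (cdf_le_one μ s)]
    · have hu : 1 ≤ u := le_of_tendsto' (tendsto_cdf_atTop μ) fun t ↦ by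
        obtain ⟨a, ha, hta⟩ := not_bddAbove_iff.mp hbdd t
        exact (monotone_cdf μ hta.le).trans ha
      have hS : cdf μ ⁻¹' Iic u = univ := eq_univ_of_forall fun a ↦ (cdf_le_one μ a).trans hu
      rw [hS, measure_univ, min_eq_left hu, ENNReal.ofReal_one]
  · have hu : u ≤ 0 := ge_of_tendsto' (tendsto_cdf_atBot μ) fun t ↦
      le_of_lt (not_le.mp fun h ↦ hne ⟨t, h⟩)
    rw [not_nonempty_iff_eq_empty.mp hne, measure_empty,
      ENNReal.ofReal_of_nonpos ((min_le_right _ _).trans hu)]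

theorem measurePreserving_cdf (hc : Continuous (cdf μ)) :
    MeasurePreserving (cdf μ) μ (volume.restrict (Ioc 0 1)) :=
  ⟨hc.measurable, map_cdf_eq_restrict_Ioc hc⟩

lemma nullSingletonClass_of_continuous_cdf (hc : Continuous (cdf μ)) : NullSingletonClass μ where
  measure_singleton a := by
    have hpre := (measurePreserving_cdf hc).measure_preimage
      (measurableSet_singleton (cdf μ a)).nullMeasurableSet
    exact measure_mono_null (fun b hb ↦ congrArg (cdf μ) hb) (hpre.trans (measure_singleton _))

lemma integral_comp_cdf (hc : Continuous (cdf μ)) {g : ℝ → ℝ} (hg : Measurable g) :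
    ∫ a, g (cdf μ a) ∂μ = ∫ t in (0 : ℝ)..1, g t := by
  rw [intervalIntegral.integral_of_le zero_le_one, ← map_cdf_eq_restrict_Ioc hc,
    integral_map hc.measurable.aemeasurable hg.aestronglyMeasurable]

lemma measureReal_Ioc_eq_cdf_sub {m M : ℝ} (h : m ≤ M) :
    μ.real (Ioc m M) = cdf μ M - cdf μ m := by
  rw [← Iic_sdiff_Iic, measureReal_sdiff (Set.Iic_subset_Iic.mpr h) measurableSet_Iic,
    cdf_eq_real, cdf_eq_real]

lemma measureReal_Ioi_eq_one_sub_cdf (M : ℝ) : μ.real (Ioi M) = 1 - cdf μ M := by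
  rw [← compl_Iic, measureReal_compl measurableSet_Iic, probReal_univ, cdf_eq_real]

lemma cdf_map_apply {Ω : Type*} [MeasurableSpace Ω] {P : Measure Ω} [IsProbabilityMeasure P]
    {X : Ω → ℝ} (hX : Measurable X) (t : ℝ) : cdf (P.map X) t = (P {ω | X ω ≤ t}).toReal := by
  have := Measure.isProbabilityMeasure_map (μ := P) hX.aemeasurable
  rw [cdf_eq_real, measureReal_def, Measure.map_apply hX measurableSet_Iic]
  rfl

end ContinuousCDF

lemma ProbabilityTheory.iIndepFun.map_prodMk_prodMk {ι Ω β : Type*} [MeasurableSpace Ω]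
    [MeasurableSpace β] {P : Measure Ω} [IsFiniteMeasure P] {f : ι → Ω → β} (h : iIndepFun f P)
    (hf : ∀ i, Measurable (f i)) {i j k : ι} (hij : i ≠ j) (hik : i ≠ k) (hjk : j ≠ k) :
    P.map (fun ω ↦ (f i ω, f j ω, f k ω))
      = (P.map (f i)).prod ((P.map (f j)).prod (P.map (f k))) := by
  rw [(indepFun_iff_map_prod_eq_prod_map_map (hf i).aemeasurable
      ((hf j).prodMk (hf k)).aemeasurable).mp (h.indepFun_prodMk hf j k i hij.symm hik.symm).symm,
    (indepFun_iff_map_prod_eq_prod_map_map (hf j).aemeasurable (hf k).aemeasurable).mp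
      (h.indepFun hjk)]

/-- For `x₁ < x₂` with `p = G x₁`, `q = G x₂`, the four terms are the probabilities of the
patterns yyxx, xyyx, xxyy and yxxy for i.i.d. `Y₁, Y₂ ~ G`, so this is the mean of
`kocharKernel x₁ x₂ Y₁ Y₂`. -/
def kocharCondMean (p q : ℝ) : ℝ := p ^ 2 + (q - p) ^ 2 - (1 - q) ^ 2 - 2 * p * (1 - q)

noncomputable def kocharProj (u : ℝ) : ℝ := -(4 / 3) * u ^ 3 + 4 * u ^ 2 - 2 * u

lemma continuous_kocharCondMean_min_max (u : ℝ) :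
    Continuous fun t ↦ kocharCondMean (min u t) (max u t) := by
  unfold kocharCondMean; fun_prop

lemma integral_kocharCondMean_min_max {u : ℝ} (h₀ : 0 ≤ u) (h₁ : u ≤ 1) :
    ∫ t in (0 : ℝ)..1, kocharCondMean (min u t) (max u t) = kocharProj u := by
  have hi := (continuous_kocharCondMean_min_max u).intervalIntegrable (μ := volume)
  have hlow : ∫ t in (0 : ℝ)..u, kocharCondMean (min u t) (max u t)
      = ∫ t in (0 : ℝ)..u, kocharCondMean t u := by
    refine intervalIntegral.integral_congr fun t ht ↦ ?_
    rw [uIcc_of_le h₀] at ht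
    simp only [min_eq_right ht.2, max_eq_left ht.2]
  have hhigh : ∫ t in u..1, kocharCondMean (min u t) (max u t)
      = ∫ t in u..1, kocharCondMean u t := by
    refine intervalIntegral.integral_congr fun t ht ↦ ?_
    rw [uIcc_of_le h₁] at ht
    simp only [min_eq_left ht.1, max_eq_right ht.1]
  rw [← intervalIntegral.integral_add_adjacent_intervals (hi 0 u) (hi u 1), hlow, hhigh]
  simp only [kocharCondMean, kocharProj]
  ring_nf
  simp (disch := (apply Continuous.intervalIntegrable; fun_prop)) [intervalIntegral.integral_add,
    intervalIntegral.integral_sub, integral_pow, intervalIntegral.integral_mul_const]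
  ring

lemma integral_kocharProj : ∫ t in Ioc 0 1, kocharProj t = 0 := by
  rw [← intervalIntegral.integral_of_le zero_le_one]
  simp only [kocharProj]
  ring_nf
  simp (disch := (apply Continuous.intervalIntegrable; fun_prop)) [intervalIntegral.integral_add,
    integral_pow, intervalIntegral.integral_mul_const]
  norm_num

lemma variance_kocharProj : Var[kocharProj; volume.restrict (Ioc 0 1)] = 8 / 105 := by
  rw [variance_eq_integral (by unfold kocharProj; fun_prop), integral_kocharProj,
    ← intervalIntegral.integral_of_le zero_le_one]
  simp only [kocharProj, sub_zero]
  ring_nf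
  simp (disch := (apply Continuous.intervalIntegrable; fun_prop)) [intervalIntegral.integral_add,
    intervalIntegral.integral_sub, integral_pow, intervalIntegral.integral_mul_const]
  norm_num

section Kernel

lemma kocharKernel_swap (x₁ x₂ y₁ y₂ : ℝ) :
    kocharKernel y₁ y₂ x₁ x₂ = -kocharKernel x₁ x₂ y₁ y₂ := by
  unfold kocharKernel; ring

lemma kocharKernel_comm (x₁ x₂ y₁ y₂ : ℝ) :
    kocharKernel x₂ x₁ y₁ y₂ = kocharKernel x₁ x₂ y₁ y₂ := by
  simp only [kocharKernel, min_comm x₂, max_comm x₂]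

lemma abs_kocharKernel_le_one (x₁ x₂ y₁ y₂ : ℝ) : |kocharKernel x₁ x₂ y₁ y₂| ≤ 1 := by
  unfold kocharKernel; split_ifs <;> norm_num

lemma measurable_kocharKernel (x : ℝ) :
    Measurable fun z : ℝ × ℝ × ℝ ↦ kocharKernel x z.1 z.2.1 z.2.2 := by
  unfold kocharKernel
  refine .sub (.ite ?_ measurable_const measurable_const)
    (.ite ?_ measurable_const measurable_const) <;> measurability

lemma kocharKernel_eq_indicator_mul {m M b c : ℝ} (h : m < M) (hb : b ∉ ({m, M} : Set ℝ))
    (hc : c ∉ ({m, M} : Set ℝ)) :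
    kocharKernel m M b c =
      (Iic m).indicator 1 b * (Iic m).indicator 1 c
        + (Ioc m M).indicator 1 b * (Ioc m M).indicator 1 c
        - (Ioi M).indicator 1 b * (Ioi M).indicator 1 c
        - (Iic m).indicator 1 b * (Ioi M).indicator 1 c
        - (Ioi M).indicator 1 b * (Iic m).indicator 1 c := by
  simp only [mem_insert_iff, mem_singleton_iff, not_or] at hb hc
  simp only [kocharKernel, indicator, Set.mem_Iic, Set.mem_Ioc, Set.mem_Ioi, Pi.one_apply,
    min_eq_left h.le, max_eq_right h.le, max_le_iff, le_min_iff, min_le_iff, le_max_iff]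
  rcases lt_or_gt_of_ne hb.1 with hbm | hbm <;> rcases lt_or_gt_of_ne hb.2 with hbM | hbM <;>
  rcases lt_or_gt_of_ne hc.1 with hcm | hcm <;> rcases lt_or_gt_of_ne hc.2 with hcM | hcM <;>
  simp [hbm, hbM, hcm, hcM, hbm.le, hbM.le, hcm.le, hcM.le, hbm.not_ge, hbM.not_ge, hcm.not_ge,
    hcM.not_ge, hbm.not_gt, hbM.not_gt, hcm.not_gt, hcM.not_gt] <;> linarith

variable {ν : Measure ℝ} [IsProbabilityMeasure ν] [NullSingletonClass ν]

lemma integral_kocharKernel_prod_of_lt {m M : ℝ} (h : m < M) :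
    ∫ z, kocharKernel m M z.1 z.2 ∂ν.prod ν = kocharCondMean (cdf ν m) (cdf ν M) := by
  set L := (Iic m).indicator (1 : ℝ → ℝ)
  set C := (Ioc m M).indicator (1 : ℝ → ℝ)
  set R := (Ioi M).indicator (1 : ℝ → ℝ)
  have hnot : ∀ᵐ b ∂ν, b ∉ ({m, M} : Set ℝ) := (toFinite _).countable.ae_notMem ν
  have hae : (fun z : ℝ × ℝ ↦ kocharKernel m M z.1 z.2) =ᵐ[ν.prod ν] fun z ↦
      L z.1 * L z.2 + C z.1 * C z.2 - R z.1 * R z.2 - L z.1 * R z.2 - R z.1 * L z.2 := by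
    filter_upwards [Measure.quasiMeasurePreserving_fst.ae hnot,
      Measure.quasiMeasurePreserving_snd.ae hnot] with z h₁ h₂
    exact kocharKernel_eq_indicator_mul h h₁ h₂
  have hint {s t : Set ℝ} (hs : MeasurableSet s) (ht : MeasurableSet t) :
      Integrable (fun z : ℝ × ℝ ↦ s.indicator 1 z.1 * t.indicator 1 z.2) (ν.prod ν) :=
    ((integrable_const (1 : ℝ)).indicator hs).mul_prod ((integrable_const (1 : ℝ)).indicator ht)
  have hmul {s t : Set ℝ} (hs : MeasurableSet s) (ht : MeasurableSet t) :
      ∫ z, s.indicator 1 z.1 * t.indicator 1 z.2 ∂ν.prod ν = ν.real s * ν.real t := by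
    rw [integral_prod_mul (L := ℝ), integral_indicator_one hs, integral_indicator_one ht]
  have hL : MeasurableSet (Iic m) := measurableSet_Iic
  have hC : MeasurableSet (Ioc m M) := measurableSet_Ioc
  have hR : MeasurableSet (Ioi M) := measurableSet_Ioi
  rw [integral_congr_ae hae, integral_sub, integral_sub, integral_sub, integral_add,
    hmul hL hL, hmul hC hC, hmul hR hR, hmul hL hR, hmul hR hL, ← cdf_eq_real,
    measureReal_Ioc_eq_cdf_sub h.le, measureReal_Ioi_eq_one_sub_cdf, kocharCondMean]
  · ring
  all_goals
    repeat' first | apply Integrable.sub | apply Integrable.add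
    all_goals refine hint ?_ ?_ <;> assumption

lemma integral_kocharKernel_prod_of_ne {x₁ x₂ : ℝ} (h : x₁ ≠ x₂) :
    ∫ z, kocharKernel x₁ x₂ z.1 z.2 ∂ν.prod ν
      = kocharCondMean (min (cdf ν x₁) (cdf ν x₂)) (max (cdf ν x₁) (cdf ν x₂)) := by
  rcases h.lt_or_gt with h | h
  · rw [integral_kocharKernel_prod_of_lt h, min_eq_left (monotone_cdf ν h.le),
      max_eq_right (monotone_cdf ν h.le)]
  · simp_rw [kocharKernel_comm x₂ x₁]
    rw [integral_kocharKernel_prod_of_lt h, min_eq_right (monotone_cdf ν h.le),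
      max_eq_left (monotone_cdf ν h.le)]

end Kernel

section Projection

variable {μ : Measure ℝ} [IsProbabilityMeasure μ]

theorem integral_kocharKernel_prod_prod (hc : Continuous (cdf μ)) (x : ℝ) :
    ∫ z, kocharKernel x z.1 z.2.1 z.2.2 ∂μ.prod (μ.prod μ) = kocharProj (cdf μ x) := by
  have := nullSingletonClass_of_continuous_cdf hc
  have hint : Integrable (fun z : ℝ × ℝ × ℝ ↦ kocharKernel x z.1 z.2.1 z.2.2)
      (μ.prod (μ.prod μ)) :=
    .of_bound (measurable_kocharKernel x).aestronglyMeasurable 1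
      (.of_forall fun z ↦ abs_kocharKernel_le_one _ _ _ _)
  rw [integral_prod _ hint]
  calc ∫ a, ∫ z, kocharKernel x a z.1 z.2 ∂μ.prod μ ∂μ
      = ∫ a, kocharCondMean (min (cdf μ x) (cdf μ a)) (max (cdf μ x) (cdf μ a)) ∂μ :=
        integral_congr_ae <| by
          filter_upwards [μ.ae_ne x] with a ha using integral_kocharKernel_prod_of_ne ha.symm
    _ = ∫ t in (0 : ℝ)..1, kocharCondMean (min (cdf μ x) t) (max (cdf μ x) t) :=
        integral_comp_cdf hc (continuous_kocharCondMean_min_max _).measurable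
    _ = kocharProj (cdf μ x) := integral_kocharCondMean_min_max (cdf_nonneg μ x) (cdf_le_one μ x)

variable {Ω : Type*} [MeasurableSpace Ω] {P : Measure Ω}

lemma integral_kocharKernel_comp {U V W : Ω → ℝ} (hU : Measurable U) (hV : Measurable V)
    (hW : Measurable W) (hlaw : P.map (fun ω ↦ (U ω, V ω, W ω)) = μ.prod (μ.prod μ))
    (hc : Continuous (cdf μ)) (x : ℝ) :
    ∫ ω, kocharKernel x (U ω) (V ω) (W ω) ∂P = kocharProj (cdf μ x) := by
  rw [← integral_kocharKernel_prod_prod hc x, ← hlaw,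
    integral_map (hU.prodMk (hV.prodMk hW)).aemeasurable
      (measurable_kocharKernel x).aestronglyMeasurable]

lemma variance_kocharProj_cdf_comp {X : Ω → ℝ} (hX : MeasurePreserving X P μ)
    (hc : Continuous (cdf μ)) :
    Var[fun ω ↦ kocharProj (cdf μ (X ω)); P] = 8 / 105 :=
  (((measurePreserving_cdf hc).comp hX).variance_fun_comp
    (by unfold kocharProj; fun_prop)).trans variance_kocharProj

end Projection

/-- Kochar kernel projections and their variances when F = G continuous. -/
theorem kochar_projections
    {Ω : Type*} [MeasureSpace Ω] [IsProbabilityMeasure (ℙ : Measure Ω)]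
    (X₁ X₂ Y₁ Y₂ : Ω → ℝ)
    (hX₁ : Measurable X₁) (hX₂ : Measurable X₂)
    (hY₁ : Measurable Y₁) (hY₂ : Measurable Y₂)
    (hindep : iIndepFun ![X₁, X₂, Y₁, Y₂] ℙ)
    (hXid : IdentDistrib X₂ X₁ ℙ ℙ) (hYid : IdentDistrib Y₂ Y₁ ℙ ℙ)
    (F G : ℝ → ℝ)
    (hF : ∀ t, F t = (ℙ {ω | X₁ ω ≤ t}).toReal)
    (hG : ∀ t, G t = (ℙ {ω | Y₁ ω ≤ t}).toReal)
    (hFG : F = G) (hFcont : Continuous F) :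
    (∀ x : ℝ, (∫ ω, kocharKernel x (X₂ ω) (Y₁ ω) (Y₂ ω) ∂ℙ)
        = -(4/3) * (G x)^3 + 4 * (G x)^2 - 2 * G x) ∧
    (∀ y : ℝ, (∫ ω, kocharKernel (X₁ ω) (X₂ ω) y (Y₂ ω) ∂ℙ)
        = (4/3) * (G y)^3 - 4 * (G y)^2 + 2 * G y) ∧
    variance (fun ω => ∫ ω', kocharKernel (X₁ ω) (X₂ ω') (Y₁ ω') (Y₂ ω') ∂ℙ) ℙ = 8/105 ∧
    variance (fun ω => ∫ ω', kocharKernel (X₁ ω') (X₂ ω') (Y₁ ω) (Y₂ ω') ∂ℙ) ℙ = 8/105 := by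
  set μ := (ℙ : Measure Ω).map X₁
  have : IsProbabilityMeasure μ := Measure.isProbabilityMeasure_map hX₁.aemeasurable
  have hcdf : cdf μ = G := funext fun t ↦ by rw [cdf_map_apply hX₁, ← hF, hFG]
  have hc : Continuous (cdf μ) := hcdf ▸ hFG ▸ hFcont
  have hlawY₁ : (ℙ : Measure Ω).map Y₁ = μ := by
    have := Measure.isProbabilityMeasure_map (μ := (ℙ : Measure Ω)) hY₁.aemeasurable
    exact Measure.eq_of_cdf _ _ (by ext t; rw [cdf_map_apply hY₁, ← hG, ← hcdf])
  have hmeas : ∀ i, Measurable (![X₁, X₂, Y₁, Y₂] i) := by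
    intro i; fin_cases i <;> assumption
  have hlaw₁ : (ℙ : Measure Ω).map (fun ω ↦ (X₂ ω, Y₁ ω, Y₂ ω)) = μ.prod (μ.prod μ) := by
    simpa [hXid.map_eq, hlawY₁, hYid.map_eq] using
      hindep.map_prodMk_prodMk hmeas (i := 1) (j := 2) (k := 3) (by decide) (by decide) (by decide)
  have hlaw₂ : (ℙ : Measure Ω).map (fun ω ↦ (Y₂ ω, X₁ ω, X₂ ω)) = μ.prod (μ.prod μ) := by
    simpa [hXid.map_eq, hlawY₁, hYid.map_eq] using
      hindep.map_prodMk_prodMk hmeas (i := 3) (j := 0) (k := 1) (by decide) (by decide) (by decide)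
  have h₁ := integral_kocharKernel_comp hX₂ hY₁ hY₂ hlaw₁ hc
  have h₂ (y : ℝ) : ∫ ω, kocharKernel (X₁ ω) (X₂ ω) y (Y₂ ω) ∂ℙ = -kocharProj (cdf μ y) := by
    simp_rw [kocharKernel_swap y]
    rw [integral_neg, integral_kocharKernel_comp hY₂ hX₁ hX₂ hlaw₂ hc]
  refine ⟨fun x ↦ by rw [h₁, hcdf, kocharProj], fun y ↦ by rw [h₂, hcdf, kocharProj]; ring, ?_, ?_⟩
  · simp_rw [h₁]
    exact variance_kocharProj_cdf_comp ⟨hX₁, rfl⟩ hc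
  · simp_rw [h₂, variance_fun_neg]
    exact variance_kocharProj_cdf_comp ⟨hY₁, hlawY₁⟩ hc
end

section
/- Let F and G be continuous cumulative distribution functions, let X_1, X_2 be i.i.d. ~ F and, independently, Y_1, Y_2 i.i.d. ~ G. Define δ(s,t) = (1 − F(s))(1 − G(t)) − (1 − F(t))(1 − G(s)) and η(F;G) = E[δ(max(X_1, Y_1), min(X_1, Y_1))]. Then η(F;G) = P(Y_1 ≤ Y_2 ≤ X_1 ≤ X_2) + P(X_1 ≤ Y_1 ≤ Y_2 ≤ X_2) − P(X_1 ≤ X_2 ≤ Y_1 ≤ Y_2) − P(Y_1 ≤ X_1 ≤ X_2 ≤ Y_2). -/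
open MeasureTheory ProbabilityTheory

/-! Write `M = X₁ ∨ Y₁` and `m = X₁ ∧ Y₁`. Since `F̄(s) Ḡ(t) = P(X₂ > s, Y₂ > t)` and `(X₂, Y₂)` is
independent of `(X₁, Y₁)`, Fubini gives `η(F;G) = P(X₂ > M, Y₂ > m) - P(X₂ > m, Y₂ > M)`.
Continuity of `F` and `G` makes ties between `{X₁, Y₁}` and `{X₂, Y₂}` null, and away from them
the difference of the two indicators is a signed sum of the indicators of four orderings of the
sample. Exchanging `Y₁ ↔ Y₂` in one of them and `X₁ ↔ X₂` in another, which does not change the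
joint law, gives the four probabilities of the statement. -/

namespace ProbabilityTheory

variable {Ω α β : Type*} [MeasurableSpace Ω] [MeasurableSpace α] [MeasurableSpace β]
  {μ : Measure Ω}

lemma measure_singleton_eq_zero_of_continuous_cdf {ν : Measure ℝ} [IsProbabilityMeasure ν]
    (h : Continuous (cdf ν)) (t : ℝ) : ν {t} = 0 := by
  rw [← measure_cdf ν, StieltjesFunction.measure_singleton,
    h.continuousWithinAt.leftLim_eq, sub_self, ENNReal.ofReal_zero]

lemma measure_eq_eq_zero_of_continuous [IsProbabilityMeasure μ] {X : Ω → ℝ} (hX : Measurable X)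
    (h : Continuous fun t => μ.real {ω | X ω ≤ t}) (t : ℝ) : μ {ω | X ω = t} = 0 := by
  have : IsProbabilityMeasure (μ.map X) := Measure.isProbabilityMeasure_map hX.aemeasurable
  have hcdf : ⇑(cdf (μ.map X)) = fun t => μ.real {ω | X ω ≤ t} := by
    ext s
    rw [cdf_eq_real, map_measureReal_apply hX measurableSet_Iic]
    rfl
  have := measure_singleton_eq_zero_of_continuous_cdf (hcdf ▸ h) t
  rwa [Measure.map_apply hX (measurableSet_singleton t)] at this

lemma IdentDistrib.measureReal_lt_eq_one_sub [IsProbabilityMeasure μ] {X X' : Ω → ℝ}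
    (h : IdentDistrib X' X μ μ) (s : ℝ) :
    μ.real {ω | s < X' ω} = 1 - μ.real {ω | X ω ≤ s} := by
  have hcompl : {ω | s < X' ω} = (X' ⁻¹' Set.Iic s)ᶜ := by ext; simp
  rw [hcompl, probReal_compl_eq_one_sub₀
      (h.aemeasurable_fst.nullMeasurableSet_preimage measurableSet_Iic),
    measureReal_def, measureReal_def, h.measure_mem_eq measurableSet_Iic]
  rfl

lemma IndepFun.ae_ne [IsFiniteMeasure μ] [MeasurableEq β]
    {U V : Ω → β} (hUV : IndepFun U V μ) (hU : Measurable U) (hV : Measurable V)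
    (hV₀ : ∀ b, μ {ω | V ω = b} = 0) : ∀ᵐ ω ∂μ, U ω ≠ V ω := by
  suffices μ ((fun ω => (U ω, V ω)) ⁻¹' Set.diagonal β) = 0 from
    measure_eq_zero_iff_ae_notMem.1 this
  rw [← Measure.map_apply (hU.prodMk hV) measurableSet_diagonal,
    (indepFun_iff_map_prod_eq_prod_map_map hU.aemeasurable hV.aemeasurable).1 hUV,
    Measure.prod_apply measurableSet_diagonal]
  have hsection (b : β) : μ.map V (Prod.mk b ⁻¹' Set.diagonal β) = 0 := by
    rw [show Prod.mk b ⁻¹' Set.diagonal β = {b} by ext; simp [eq_comm],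
      Measure.map_apply hV (measurableSet_singleton b)]
    exact hV₀ b
  simp only [hsection, lintegral_zero]

lemma iIndepFun.identDistrib_comp_perm {ι : Type*} [Fintype ι] {f : ι → Ω → β}
    (hf : iIndepFun f μ) (σ : Equiv.Perm ι) (hσ : ∀ i, IdentDistrib (f (σ i)) (f i) μ μ) :
    IdentDistrib (fun ω i => f (σ i) ω) (fun ω i => f i ω) μ μ where
  aemeasurable_fst := aemeasurable_pi_lambda _ fun i => (hσ i).aemeasurable_fst
  aemeasurable_snd := aemeasurable_pi_lambda _ fun i => (hσ i).aemeasurable_snd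
  map_eq := by
    rw [(hf.precomp σ.injective).map_fun_eq_pi_map fun i => (hσ i).aemeasurable_fst,
      hf.map_fun_eq_pi_map fun i => (hσ i).aemeasurable_snd]
    simp_rw [(hσ _).map_eq]

lemma iIndepFun.measure_comp_swap_eq {ι : Type*} [Fintype ι] [DecidableEq ι] {f : ι → Ω → β}
    (hf : iIndepFun f μ) (hm : ∀ k, AEMeasurable (f k) μ) {i j : ι}
    (hij : IdentDistrib (f i) (f j) μ μ) {S : Set (ι → β)} (hS : MeasurableSet S) :
    μ {ω | (fun k => f (Equiv.swap i j k) ω) ∈ S} = μ {ω | (fun k => f k ω) ∈ S} := by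
  refine (hf.identDistrib_comp_perm _ fun k => ?_).measure_mem_eq hS
  rcases eq_or_ne k i with rfl | hki
  · simpa using hij.symm
  rcases eq_or_ne k j with rfl | hkj
  · simpa using hij
  rw [Equiv.swap_apply_of_ne_of_ne hki hkj]
  exact .refl (hm k)

lemma measureReal_prodMk_preimage_eq_map {V : Ω → β} (hV : Measurable V) {S : Set (α × β)}
    (hS : MeasurableSet S) (a : α) :
    μ.real {ω | (a, V ω) ∈ S} = (μ.map V).real (Prod.mk a ⁻¹' S) :=
  (map_measureReal_apply hV (measurable_prodMk_left hS)).symm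

variable [IsFiniteMeasure μ] {U : Ω → α} {V : Ω → β} {S : Set (α × β)}

lemma integrable_measureReal_section (hU : Measurable U) (hV : Measurable V)
    (hS : MeasurableSet S) : Integrable (fun ω => μ.real {ω' | (U ω, V ω') ∈ S}) μ := by
  simp_rw [measureReal_prodMk_preimage_eq_map hV hS]
  exact (Measure.integrable_measure_prodMk_left hS (measure_ne_top _ _)).comp_measurable hU

lemma IndepFun.integral_measureReal_section (hUV : IndepFun U V μ) (hU : Measurable U)
    (hV : Measurable V) (hS : MeasurableSet S) :
    ∫ ω, μ.real {ω' | (U ω, V ω') ∈ S} ∂μ = μ.real {ω | (U ω, V ω) ∈ S} := by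
  have hsection : Measurable fun a => (μ.map V).real (Prod.mk a ⁻¹' S) :=
    (measurable_measure_prodMk_left hS).ennreal_toReal
  simp_rw [measureReal_prodMk_preimage_eq_map hV hS]
  calc ∫ ω, (μ.map V).real (Prod.mk (U ω) ⁻¹' S) ∂μ
      = ∫ a, (μ.map V).real (Prod.mk a ⁻¹' S) ∂(μ.map U) :=
        (integral_map hU.aemeasurable hsection.aestronglyMeasurable).symm
    _ = ((μ.map U).prod (μ.map V)).real S := by
        simp_rw [measureReal_def]
        rw [Measure.prod_apply hS, integral_toReal (measurable_measure_prodMk_left hS).aemeasurable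
          (ae_of_all _ fun _ => measure_lt_top _ _)]
    _ = μ.real {ω | (U ω, V ω) ∈ S} := by
        rw [← (indepFun_iff_map_prod_eq_prod_map_map hU.aemeasurable hV.aemeasurable).1 hUV,
          map_measureReal_apply (hU.prodMk hV) hS]
        rfl

end ProbabilityTheory

lemma ite_crossing_eq {x y x' y' : ℝ} (hxx' : x ≠ x') (hxy' : x ≠ y') (hyx' : y ≠ x')
    (hyy' : y ≠ y') :
    ((if max x y < x' ∧ min x y < y' then 1 else 0)
        - if min x y < x' ∧ max x y < y' then 1 else 0 : ℝ)
      = (if y ≤ y' ∧ y' ≤ x ∧ x ≤ x' then 1 else 0) + (if x ≤ y' ∧ y' ≤ y ∧ y ≤ x' then 1 else 0)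
        - (if x ≤ x' ∧ x' ≤ y ∧ y ≤ y' then 1 else 0)
        - (if y ≤ x' ∧ x' ≤ x ∧ x ≤ y' then 1 else 0) := by
  split_ifs <;> grind

section Crossing

variable {Ω : Type*} [MeasurableSpace Ω] {μ : Measure Ω} [IsFiniteMeasure μ]
  {X₁ Y₁ X₂ Y₂ : Ω → ℝ}

lemma integral_crossing_eq_measureReal_sub (hX₁ : Measurable X₁) (hY₁ : Measurable Y₁)
    (hX₂ : Measurable X₂) (hY₂ : Measurable Y₂)
    (hpair : IndepFun (fun ω => (X₁ ω, Y₁ ω)) (fun ω => (X₂ ω, Y₂ ω)) μ)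
    (hXY₂ : IndepFun X₂ Y₂ μ) {F G : ℝ → ℝ} (hF : ∀ s, 1 - F s = μ.real {ω | s < X₂ ω})
    (hG : ∀ s, 1 - G s = μ.real {ω | s < Y₂ ω}) :
    ∫ ω, ((1 - F (max (X₁ ω) (Y₁ ω))) * (1 - G (min (X₁ ω) (Y₁ ω)))
         - (1 - F (min (X₁ ω) (Y₁ ω))) * (1 - G (max (X₁ ω) (Y₁ ω)))) ∂μ
      = μ.real {ω | max (X₁ ω) (Y₁ ω) < X₂ ω ∧ min (X₁ ω) (Y₁ ω) < Y₂ ω}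
        - μ.real {ω | min (X₁ ω) (Y₁ ω) < X₂ ω ∧ max (X₁ ω) (Y₁ ω) < Y₂ ω} := by
  have hsurvival (a b : ℝ) : (1 - F a) * (1 - G b) = μ.real {ω | a < X₂ ω ∧ b < Y₂ ω} := by
    rw [hF, hG, measureReal_def, measureReal_def, ← ENNReal.toReal_mul]
    exact congrArg ENNReal.toReal
      (hXY₂.measure_inter_preimage_eq_mul _ _ measurableSet_Ioi measurableSet_Ioi).symm
  have hU := hX₁.prodMk hY₁
  have hV := hX₂.prodMk hY₂
  have hS {a b : ℝ × ℝ → ℝ} (ha : Measurable a) (hb : Measurable b) :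
      MeasurableSet {p : (ℝ × ℝ) × (ℝ × ℝ) | a p.1 < p.2.1 ∧ b p.1 < p.2.2} :=
    (measurableSet_lt (ha.comp measurable_fst) measurable_snd.fst).inter
      (measurableSet_lt (hb.comp measurable_fst) measurable_snd.snd)
  have hmax : Measurable fun q : ℝ × ℝ => max q.1 q.2 := by fun_prop
  have hmin : Measurable fun q : ℝ × ℝ => min q.1 q.2 := by fun_prop
  have hA := hpair.integral_measureReal_section hU hV (hS hmax hmin)
  have hB := hpair.integral_measureReal_section hU hV (hS hmin hmax)
  have hAi := integrable_measureReal_section (μ := μ) hU hV (hS hmax hmin)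
  have hBi := integrable_measureReal_section (μ := μ) hU hV (hS hmin hmax)
  simp only [Set.mem_ofPred_eq] at hA hB hAi hBi
  simp_rw [hsurvival]
  rw [integral_sub hAi hBi, hA, hB]

lemma measureReal_crossing_sub_eq (hX₁ : Measurable X₁) (hY₁ : Measurable Y₁)
    (hX₂ : Measurable X₂) (hY₂ : Measurable Y₂)
    (hties : ∀ᵐ ω ∂μ, X₁ ω ≠ X₂ ω ∧ X₁ ω ≠ Y₂ ω ∧ Y₁ ω ≠ X₂ ω ∧ Y₁ ω ≠ Y₂ ω) :
    μ.real {ω | max (X₁ ω) (Y₁ ω) < X₂ ω ∧ min (X₁ ω) (Y₁ ω) < Y₂ ω}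
        - μ.real {ω | min (X₁ ω) (Y₁ ω) < X₂ ω ∧ max (X₁ ω) (Y₁ ω) < Y₂ ω}
      = μ.real {ω | Y₁ ω ≤ Y₂ ω ∧ Y₂ ω ≤ X₁ ω ∧ X₁ ω ≤ X₂ ω}
        + μ.real {ω | X₁ ω ≤ Y₂ ω ∧ Y₂ ω ≤ Y₁ ω ∧ Y₁ ω ≤ X₂ ω}
        - μ.real {ω | X₁ ω ≤ X₂ ω ∧ X₂ ω ≤ Y₁ ω ∧ Y₁ ω ≤ Y₂ ω}
        - μ.real {ω | Y₁ ω ≤ X₂ ω ∧ X₂ ω ≤ X₁ ω ∧ X₁ ω ≤ Y₂ ω} := by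
  have hA : MeasurableSet {ω | max (X₁ ω) (Y₁ ω) < X₂ ω ∧ min (X₁ ω) (Y₁ ω) < Y₂ ω} := by
    measurability
  have hB : MeasurableSet {ω | min (X₁ ω) (Y₁ ω) < X₂ ω ∧ max (X₁ ω) (Y₁ ω) < Y₂ ω} := by
    measurability
  have h₁ : MeasurableSet {ω | Y₁ ω ≤ Y₂ ω ∧ Y₂ ω ≤ X₁ ω ∧ X₁ ω ≤ X₂ ω} := by measurability
  have h₂ : MeasurableSet {ω | X₁ ω ≤ Y₂ ω ∧ Y₂ ω ≤ Y₁ ω ∧ Y₁ ω ≤ X₂ ω} := by measurability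
  have h₃ : MeasurableSet {ω | X₁ ω ≤ X₂ ω ∧ X₂ ω ≤ Y₁ ω ∧ Y₁ ω ≤ Y₂ ω} := by measurability
  have h₄ : MeasurableSet {ω | Y₁ ω ≤ X₂ ω ∧ X₂ ω ≤ X₁ ω ∧ X₁ ω ≤ Y₂ ω} := by measurability
  have hint {s : Set Ω} (hs : MeasurableSet s) : Integrable (s.indicator (1 : Ω → ℝ)) μ :=
    (integrable_const (1 : ℝ)).indicator hs
  rw [← integral_indicator_one hA, ← integral_indicator_one hB, ← integral_indicator_one h₁,
    ← integral_indicator_one h₂, ← integral_indicator_one h₃, ← integral_indicator_one h₄,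
    ← integral_sub' (hint hA) (hint hB), ← integral_add' (hint h₁) (hint h₂),
    ← integral_sub' ((hint h₁).add (hint h₂)) (hint h₃),
    ← integral_sub' (((hint h₁).add (hint h₂)).sub (hint h₃)) (hint h₄)]
  refine integral_congr_ae (hties.mono fun ω h => ?_)
  simp only [Pi.add_apply, Pi.sub_apply, Set.indicator_apply, Set.mem_ofPred_eq, Pi.one_apply]
  exact ite_crossing_eq h.1 h.2.1 h.2.2.1 h.2.2.2

end Crossing

/-- the Kochar functional η(F;G) as a combination of ordering probabilities. -/
theorem kochar_eta_representation
    {Ω : Type*} [MeasureSpace Ω] [IsProbabilityMeasure (ℙ : Measure Ω)]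
    (X₁ X₂ Y₁ Y₂ : Ω → ℝ)
    (hX₁ : Measurable X₁) (hX₂ : Measurable X₂)
    (hY₁ : Measurable Y₁) (hY₂ : Measurable Y₂)
    (hindep : iIndepFun ![X₁, X₂, Y₁, Y₂] ℙ)
    (hXid : IdentDistrib X₂ X₁ ℙ ℙ) (hYid : IdentDistrib Y₂ Y₁ ℙ ℙ)
    (F G : ℝ → ℝ)
    (hF : ∀ t, F t = (ℙ {ω | X₁ ω ≤ t}).toReal)
    (hG : ∀ t, G t = (ℙ {ω | Y₁ ω ≤ t}).toReal)
    (hFcont : Continuous F) (hGcont : Continuous G) :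
    (∫ ω, ((1 - F (max (X₁ ω) (Y₁ ω))) * (1 - G (min (X₁ ω) (Y₁ ω)))
         - (1 - F (min (X₁ ω) (Y₁ ω))) * (1 - G (max (X₁ ω) (Y₁ ω)))) ∂ℙ)
      = (ℙ {ω | Y₁ ω ≤ Y₂ ω ∧ Y₂ ω ≤ X₁ ω ∧ X₁ ω ≤ X₂ ω}).toReal
      + (ℙ {ω | X₁ ω ≤ Y₁ ω ∧ Y₁ ω ≤ Y₂ ω ∧ Y₂ ω ≤ X₂ ω}).toReal
      - (ℙ {ω | X₁ ω ≤ X₂ ω ∧ X₂ ω ≤ Y₁ ω ∧ Y₁ ω ≤ Y₂ ω}).toReal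
      - (ℙ {ω | Y₁ ω ≤ X₁ ω ∧ X₁ ω ≤ X₂ ω ∧ X₂ ω ≤ Y₂ ω}).toReal := by
  have hmeas : ∀ i, Measurable (![X₁, X₂, Y₁, Y₂] i) := fun i => by fin_cases i <;> assumption
  have hpair : IndepFun (fun ω => (X₁ ω, Y₁ ω)) (fun ω => (X₂ ω, Y₂ ω)) ℙ := by
    simpa using hindep.indepFun_prodMk_prodMk hmeas 0 2 1 3
      (by decide) (by decide) (by decide) (by decide)
  have hFbar (s : ℝ) : 1 - F s = (ℙ : Measure Ω).real {ω | s < X₂ ω} := by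
    rw [hF, hXid.measureReal_lt_eq_one_sub]; rfl
  have hGbar (s : ℝ) : 1 - G s = (ℙ : Measure Ω).real {ω | s < Y₂ ω} := by
    rw [hG, hYid.measureReal_lt_eq_one_sub]; rfl
  have hX₁₀ := measure_eq_eq_zero_of_continuous (μ := ℙ) hX₁
    (by simpa only [measureReal_def, ← hF] using hFcont)
  have hY₁₀ := measure_eq_eq_zero_of_continuous (μ := ℙ) hY₁
    (by simpa only [measureReal_def, ← hG] using hGcont)
  have hties : ∀ᵐ ω ∂ℙ, X₁ ω ≠ X₂ ω ∧ X₁ ω ≠ Y₂ ω ∧ Y₁ ω ≠ X₂ ω ∧ Y₁ ω ≠ Y₂ ω := by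
    filter_upwards [(hindep.indepFun (i := 1) (j := 0) (by decide)).ae_ne hX₂ hX₁ hX₁₀,
      (hindep.indepFun (i := 3) (j := 0) (by decide)).ae_ne hY₂ hX₁ hX₁₀,
      (hindep.indepFun (i := 1) (j := 2) (by decide)).ae_ne hX₂ hY₁ hY₁₀,
      (hindep.indepFun (i := 3) (j := 2) (by decide)).ae_ne hY₂ hY₁ hY₁₀] with ω h₁ h₂ h₃ h₄
    exact ⟨h₁.symm, h₂.symm, h₃.symm, h₄.symm⟩
  have hswapX : ℙ {ω | Y₁ ω ≤ X₂ ω ∧ X₂ ω ≤ X₁ ω ∧ X₁ ω ≤ Y₂ ω}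
      = ℙ {ω | Y₁ ω ≤ X₁ ω ∧ X₁ ω ≤ X₂ ω ∧ X₂ ω ≤ Y₂ ω} :=
    hindep.measure_comp_swap_eq (fun k => (hmeas k).aemeasurable) (i := 1) (j := 0) hXid
      (S := {v | v 2 ≤ v 0 ∧ v 0 ≤ v 1 ∧ v 1 ≤ v 3}) (by measurability)
  have hswapY : ℙ {ω | X₁ ω ≤ Y₂ ω ∧ Y₂ ω ≤ Y₁ ω ∧ Y₁ ω ≤ X₂ ω}
      = ℙ {ω | X₁ ω ≤ Y₁ ω ∧ Y₁ ω ≤ Y₂ ω ∧ Y₂ ω ≤ X₂ ω} :=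
    hindep.measure_comp_swap_eq (fun k => (hmeas k).aemeasurable) (i := 3) (j := 2) hYid
      (S := {v | v 0 ≤ v 2 ∧ v 2 ≤ v 3 ∧ v 3 ≤ v 1}) (by measurability)
  rw [integral_crossing_eq_measureReal_sub hX₁ hY₁ hX₂ hY₂ hpair
      (hindep.indepFun (i := 1) (j := 3) (by decide)) hFbar hGbar,
    measureReal_crossing_sub_eq hX₁ hY₁ hX₂ hY₂ hties]
  simp only [measureReal_def, hswapX, hswapY]
end
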